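/- arXiv:2008.06801 — 2 statements merged into one kernel-verified Lean document; each statement's English description precedes it below -/
import Mathlib

section
/- Let n : ℕ and let P in MvPolynomial (Fin n) ℚ be symmetric, i.e., invariant under renaming the variables by every permutation σ : Equiv.Perm (Fin n). Then there exists a univariate polynomial q : Polynomial ℚ with natDegree q ≤ n such that P - (the result of substituting the linear functional ∑_{i : Fin n} X i for the variable of q) lies in the ideal I generated by {X i ^ 2 - X i : i ∈ Fin n}. -/
/-!
Modulo the ideal generated by the `X i ^ 2 - X i` the variables become idempotent, and for
idempotents `x i` with sum `s` one has `k! * e_k(x) = s (s - 1) ⋯ (s - k + 1)`: adding one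
idempotent `e` to `s` changes the value of a polynomial `f` by `e * (f (s + 1) - f s)`, which
matches the recursion `e_{k+1}(x, e) = e_{k+1}(x) + e * e_k(x)`. By the fundamental theorem of
symmetric polynomials `P` is a polynomial in the `e_k`, hence congruent to a polynomial in `s`.
Since `e_{n+1}` of `n` variables vanishes, so does the falling factorial of degree `n + 1` at `s`,
and reducing modulo it brings the degree down to `n`.
-/

open MvPolynomial
open scoped Nat

theorem Polynomial.eval_add_of_isIdempotentElem {A : Type*} [CommRing A] (p : Polynomial A)
    {e : A} (he : IsIdempotentElem e) (a : A) :
    p.eval (e + a) = p.eval a + e * (p.eval (a + 1) - p.eval a) := by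
  have pow_eq (n : ℕ) : (e + a) ^ n = a ^ n + e * ((a + 1) ^ n - a ^ n) := by
    induction n with
    | zero => simp
    | succ n ih => linear_combination (e + a) * ih + ((a + 1) ^ n - a ^ n) * he.eq
  induction p using Polynomial.induction_on' with
  | add p q hp hq => simp only [eval_add, hp, hq]; ring
  | monomial n c => simp only [eval_monomial, pow_eq]; ring

theorem Multiset.esymm_cons_succ {R : Type*} [CommSemiring R] (a : R) (s : Multiset R) (k : ℕ) :
    (a ::ₘ s).esymm (k + 1) = s.esymm (k + 1) + a * s.esymm k := by
  simp [Multiset.esymm, Multiset.powersetCard_cons, Multiset.map_map, Multiset.sum_map_mul_left]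

theorem Multiset.factorial_mul_esymm_eq_descPochhammer_eval_sum {A : Type*} [CommRing A]
    (s : Multiset A) (hs : ∀ a ∈ s, IsIdempotentElem a) (k : ℕ) :
    (k ! : A) * s.esymm k = (descPochhammer A k).eval s.sum := by
  induction s using Multiset.induction_on generalizing k with
  | empty => cases k <;> simp [Multiset.esymm, Multiset.powersetCard_zero_right]
  | cons a s ih =>
    have ha := hs a (Multiset.mem_cons_self a s)
    have ih := ih fun b hb => hs b (Multiset.mem_cons_of_mem hb)
    cases k with
    | zero => simp [Multiset.esymm]
    | succ k =>
      rw [Multiset.esymm_cons_succ, Multiset.sum_cons,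
        Polynomial.eval_add_of_isIdempotentElem _ ha, descPochhammer_succ_eval,
        descPochhammer_succ_left, Polynomial.eval_mul, Polynomial.eval_comp]
      simp only [Polynomial.eval_X, Polynomial.eval_sub, Polynomial.eval_one, add_sub_cancel_right]
      have ih_succ := ih (k + 1)
      rw [descPochhammer_succ_eval, Nat.factorial_succ] at ih_succ
      rw [Nat.factorial_succ]
      push_cast at ih_succ ⊢
      linear_combination ih_succ + a * (↑k + 1 : A) * ih k

namespace MvPolynomial

section CommRing

variable {σ R : Type*} [CommRing R]

variable (σ R) in
noncomputable def booleanIdeal : Ideal (MvPolynomial σ R) :=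
  Ideal.span (Set.range fun i => X i ^ 2 - X i)

theorem isIdempotentElem_mk_X_booleanIdeal (i : σ) :
    IsIdempotentElem (Ideal.Quotient.mk (booleanIdeal σ R) (X i)) := by
  rw [IsIdempotentElem, ← map_mul, ← sub_eq_zero, ← map_sub, Ideal.Quotient.eq_zero_iff_mem, ← sq]
  exact Ideal.subset_span ⟨i, rfl⟩

variable [Fintype σ]

local notation "π" => Ideal.Quotient.mkₐ R (booleanIdeal σ R)

theorem factorial_mul_mkₐ_esymm_eq_aeval_descPochhammer (k : ℕ) :
    (k ! : MvPolynomial σ R ⧸ booleanIdeal σ R) * π (esymm σ R k) =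
      Polynomial.aeval (π (∑ i, X i)) (descPochhammer R k) := by
  rw [DFunLike.congr_fun (aeval_unique π), aeval_esymm_eq_multiset_esymm, map_sum,
    Polynomial.aeval_def, ← Polynomial.eval_map, descPochhammer_map, Finset.sum_eq_multiset_sum]
  exact Multiset.factorial_mul_esymm_eq_descPochhammer_eval_sum _
    (by simpa using fun i => isIdempotentElem_mk_X_booleanIdeal i) k

theorem mkₐ_aeval_descPochhammer_card_succ_eq_zero :
    π (Polynomial.aeval (∑ i, X i) (descPochhammer R (Fintype.card σ + 1))) = 0 := by
  rw [← Polynomial.aeval_algHom_apply, ← factorial_mul_mkₐ_esymm_eq_aeval_descPochhammer, esymm,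
    Finset.powersetCard_eq_empty.mpr (by simp), Finset.sum_empty, map_zero, mul_zero]

end CommRing

section Field

variable {σ K : Type*} [Fintype σ] [Field K] [CharZero K]

local notation "π" => Ideal.Quotient.mkₐ K (booleanIdeal σ K)

theorem mkₐ_esymm_eq_mkₐ_aeval (k : ℕ) :
    π (esymm σ K k) =
      π (Polynomial.aeval (∑ i, X i) (Polynomial.C (k ! : K)⁻¹ * descPochhammer K k)) := by
  rw [← Polynomial.aeval_algHom_apply, Polynomial.aeval_mul, Polynomial.aeval_C,
    ← factorial_mul_mkₐ_esymm_eq_aeval_descPochhammer, ← mul_assoc,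
    ← map_natCast (algebraMap K (MvPolynomial σ K ⧸ booleanIdeal σ K)), ← map_mul,
    inv_mul_cancel₀ (Nat.cast_ne_zero.mpr k.factorial_ne_zero), map_one, one_mul]

theorem IsSymmetric.exists_mkₐ_eq_mkₐ_aeval_sum_X {P : MvPolynomial σ K} (hP : P.IsSymmetric) :
    ∃ q : Polynomial K, π P = π (Polynomial.aeval (∑ i, X i) q) := by
  obtain ⟨Q, hQ⟩ := esymmAlgHom_surjective K le_rfl ⟨P, hP⟩
  have hPQ : P = aeval (fun i : Fin (Fintype.card σ) => esymm σ K (i + 1)) Q := by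
    rw [← esymmAlgHom_apply, hQ]
  refine ⟨aeval (fun i : Fin (Fintype.card σ) =>
    Polynomial.C ((i + 1 : ℕ) ! : K)⁻¹ * descPochhammer K (i + 1)) Q, ?_⟩
  rw [hPQ, comp_aeval_apply, ← Polynomial.aeval_algHom_apply, comp_aeval_apply]
  simp_rw [mkₐ_esymm_eq_mkₐ_aeval, Polynomial.aeval_algHom_apply]

theorem IsSymmetric.exists_natDegree_le_mkₐ_eq_mkₐ_aeval_sum_X {P : MvPolynomial σ K}
    (hP : P.IsSymmetric) :
    ∃ q : Polynomial K, q.natDegree ≤ Fintype.card σ ∧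
      π P = π (Polynomial.aeval (∑ i, X i) q) := by
  obtain ⟨q, hq⟩ := hP.exists_mkₐ_eq_mkₐ_aeval_sum_X
  have hD := descPochhammer_natDegree K (Fintype.card σ + 1)
  have hlt := Polynomial.natDegree_modByMonic_lt q (monic_descPochhammer K (Fintype.card σ + 1))
    fun h => by simp [h] at hD
  refine ⟨q %ₘ descPochhammer K (Fintype.card σ + 1), by omega, ?_⟩
  nth_rw 1 [hq, ← Polynomial.modByMonic_add_div q (descPochhammer K (Fintype.card σ + 1))]
  rw [map_add, map_add, map_mul, map_mul, mkₐ_aeval_descPochhammer_card_succ_eq_zero, zero_mul,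
    add_zero]

end Field

end MvPolynomial

theorem symmetric_congruent_univariate_in_linear_functional (n : ℕ)
    (P : MvPolynomial (Fin n) ℚ)
    (hP : ∀ σ : Equiv.Perm (Fin n), MvPolynomial.rename σ P = P) :
    ∃ q : Polynomial ℚ, q.natDegree ≤ n ∧
      P - Polynomial.aeval (∑ i : Fin n, (X i : MvPolynomial (Fin n) ℚ)) q ∈
        Ideal.span (Set.range fun i : Fin n =>
          (X i : MvPolynomial (Fin n) ℚ) ^ 2 - X i) := by
  obtain ⟨q, hdeg, hq⟩ := IsSymmetric.exists_natDegree_le_mkₐ_eq_mkₐ_aeval_sum_X hP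
  exact ⟨q, by simpa using hdeg, (Ideal.Quotient.mk_eq_mk_iff_sub_mem _ _).mp hq⟩
end

section
/- Let n s : ℕ with s ≤ n. There exist μ : ℂ and γ : Fin s → ℂ such that the polynomial ∑_{t=0}^{s} esymm (Fin n) ℂ t - μ • ∏_{j : Fin s} (C (γ j) + ∑_{i : Fin n} X i) lies in the ideal I generated by {X i ^ 2 - X i : i ∈ Fin n}. That is, modulo I the multilinear polynomial listing all subsets of size at most s factors completely into s linear factors in the single linear functional ∑_i X i. -/
/-!
Modulo the relations `X i ^ 2 = X i` the variables become idempotents `x i`, and multiplying a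
squarefree monomial of degree `t` by `ℓ = ∑ i, x i` gives `t` copies of itself plus every way of
extending it by one new variable. Hence `e t * ℓ = t * e t + (t + 1) * e (t + 1)` for the
elementary symmetric functions `e t` of the `x i`, so `ℓ (ℓ - 1) ⋯ (ℓ - t + 1) = t! * e t`, i.e.
`e t` is `ℓ` substituted into `(X choose t)`. Thus `∑_{t ≤ s} e t = p ℓ` for the polynomial
`p = ∑_{t ≤ s} (X choose t)` of degree `s`, and factoring `p` over `ℂ` gives the `s` linear factors.
-/

open Finset

section Idempotent

variable {ι : Type*} [DecidableEq ι]

theorem Finset.prod_mul_eq_prod_insert_of_isIdempotentElem {M : Type*} [CommMonoid M]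
    {x : ι → M} {i : ι} (hx : IsIdempotentElem (x i)) (s : Finset ι) :
    (∏ j ∈ s, x j) * x i = ∏ j ∈ insert i s, x j := by
  by_cases hi : i ∈ s
  · rw [insert_eq_of_mem hi, ← mul_prod_erase s x hi, mul_right_comm, hx.eq]
  · rw [prod_insert hi, mul_comm]

theorem Finset.sum_powersetCard_sum_sdiff_insert {M : Type*} [AddCommMonoid M]
    (A : Finset ι) (t : ℕ) (f : Finset ι → M) :
    ∑ s ∈ powersetCard t A, ∑ i ∈ A \ s, f (insert i s) =
      (t + 1) • ∑ u ∈ powersetCard (t + 1) A, f u := by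
  have hcount : ∀ u ∈ powersetCard (t + 1) A,
      (t + 1) • f u = ∑ i ∈ u, f (insert i (u.erase i)) := by
    intro u hu
    rw [← (mem_powersetCard.mp hu).2, ← sum_const]
    exact sum_congr rfl fun i hi => by rw [insert_erase hi]
  rw [smul_sum, sum_congr rfl hcount, sum_sigma', sum_sigma']
  refine sum_nbij' (fun p => ⟨insert p.2 p.1, p.2⟩) (fun p => ⟨p.1.erase p.2, p.2⟩)
    ?_ ?_ ?_ ?_ ?_
  · rintro ⟨s, i⟩ h
    simp only [mem_sigma, mem_powersetCard, mem_sdiff] at h ⊢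
    exact ⟨⟨insert_subset h.2.1 h.1.1, by rw [card_insert_of_notMem h.2.2, h.1.2]⟩,
      mem_insert_self _ _⟩
  · rintro ⟨u, i⟩ h
    simp only [mem_sigma, mem_powersetCard, mem_sdiff] at h ⊢
    exact ⟨⟨(erase_subset _ _).trans h.1.1, by rw [card_erase_of_mem h.2, h.1.2]; rfl⟩,
      h.1.1 h.2, notMem_erase _ _⟩
  · rintro ⟨s, i⟩ h
    simp only [mem_sigma, mem_sdiff] at h
    simp [erase_insert h.2.2]
  · rintro ⟨u, i⟩ h
    simp only [mem_sigma] at h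
    simp [insert_erase h.2]
  · rintro ⟨s, i⟩ h
    simp only [mem_sigma, mem_sdiff] at h
    simp [erase_insert h.2.2]

theorem Multiset.esymm_map_mul_sum_of_isIdempotentElem {R : Type*} [CommSemiring R]
    {x : ι → R} {A : Finset ι} (hx : ∀ i ∈ A, IsIdempotentElem (x i)) (t : ℕ) :
    (A.val.map x).esymm t * ∑ i ∈ A, x i =
      t • (A.val.map x).esymm t + (t + 1) • (A.val.map x).esymm (t + 1) := by
  have hterm : ∀ s ∈ Finset.powersetCard t A, (∏ j ∈ s, x j) * ∑ i ∈ A, x i =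
      t • ∏ j ∈ s, x j + ∑ i ∈ A \ s, ∏ j ∈ insert i s, x j := by
    intro s hs
    obtain ⟨hsA, rfl⟩ := Finset.mem_powersetCard.mp hs
    rw [Finset.mul_sum, ← Finset.sum_sdiff hsA, add_comm, ← Finset.sum_const]
    congr 1 <;> refine Finset.sum_congr rfl fun i hi => ?_
    · rw [prod_mul_eq_prod_insert_of_isIdempotentElem (hx i (hsA hi)), insert_eq_of_mem hi]
    · exact prod_mul_eq_prod_insert_of_isIdempotentElem (hx i (Finset.sdiff_subset hi)) s
  simp only [Finset.esymm_map_val, sum_mul]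
  rw [Finset.sum_congr rfl hterm, Finset.sum_add_distrib, ← Finset.smul_sum]
  exact congrArg _ (sum_powersetCard_sum_sdiff_insert A t fun u => ∏ j ∈ u, x j)

theorem descPochhammer_eval_sum_of_isIdempotentElem {R : Type*} [CommRing R] {x : ι → R}
    {A : Finset ι} (hx : ∀ i ∈ A, IsIdempotentElem (x i)) (t : ℕ) :
    (descPochhammer R t).eval (∑ i ∈ A, x i) = t.factorial • (A.val.map x).esymm t := by
  induction t with
  | zero => simp [Multiset.esymm]
  | succ t ih =>
    have hrec := Multiset.esymm_map_mul_sum_of_isIdempotentElem hx t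
    rw [descPochhammer_succ_eval, ih, smul_mul_assoc, mul_sub, hrec, Nat.factorial_succ,
      mul_comm, mul_smul]
    simp only [nsmul_eq_mul]; push_cast; ring

end Idempotent

namespace Polynomial

open scoped Polynomial

theorem exists_eq_C_leadingCoeff_mul_prod_X_sub_C {K : Type*} [Field K] [IsAlgClosed K]
    {p : K[X]} {m : ℕ} (hp : p.natDegree = m) :
    ∃ r : Fin m → K, p = C p.leadingCoeff * ∏ j, (X - C (r j)) := by
  have hlen : p.roots.toList.length = m := by
    rw [Multiset.length_toList, ← hp, splits_iff_card_roots.mp (IsAlgClosed.splits p)]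
  refine ⟨fun j => p.roots.toList[j.cast hlen.symm], ?_⟩
  conv_lhs => rw [(IsAlgClosed.splits p).eq_prod_roots, ← Multiset.coe_toList p.roots,
    Multiset.map_coe, Multiset.prod_coe, ← Fin.prod_univ_fun_getElem,
    ← Fin.prod_congr' _ hlen.symm]
  rfl

/-- `∑_{t ≤ s} (X choose t)`. -/
noncomputable def chooseSum (K : Type*) [Field K] (s : ℕ) : K[X] :=
  ∑ t ∈ range (s + 1), C (t.factorial : K)⁻¹ * descPochhammer K t

section CharZero

variable {K : Type*} [Field K] [CharZero K]

theorem degree_chooseSum (s : ℕ) : (chooseSum K s).degree = s := by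
  induction s with
  | zero => simp [chooseSum]
  | succ s ih =>
    have htop : (C ((s + 1).factorial : K)⁻¹ * descPochhammer K (s + 1)).degree = ↑(s + 1) := by
      rw [degree_C_mul (inv_ne_zero (Nat.cast_ne_zero.mpr (s + 1).factorial_ne_zero)),
        degree_eq_natDegree (monic_descPochhammer K _).ne_zero, descPochhammer_natDegree]
    have hlt : (chooseSum K s).degree < ↑(s + 1) := by
      rw [ih]; exact_mod_cast s.lt_succ_self
    rw [chooseSum, sum_range_succ, ← chooseSum, degree_add_eq_right_of_degree_lt (htop ▸ hlt), htop]

theorem natDegree_chooseSum (s : ℕ) : (chooseSum K s).natDegree = s :=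
  natDegree_eq_of_degree_eq_some (degree_chooseSum s)

theorem aeval_sum_chooseSum_of_isIdempotentElem {S ι : Type*} [CommRing S] [Algebra K S]
    [DecidableEq ι] {x : ι → S} {A : Finset ι} (hx : ∀ i ∈ A, IsIdempotentElem (x i)) (s : ℕ) :
    aeval (∑ i ∈ A, x i) (chooseSum K s) = ∑ t ∈ range (s + 1), (A.val.map x).esymm t := by
  rw [chooseSum, map_sum]
  refine sum_congr rfl fun t _ => ?_
  rw [map_mul, aeval_C, aeval_def, eval₂_eq_eval_map, descPochhammer_map,
    descPochhammer_eval_sum_of_isIdempotentElem hx, nsmul_eq_mul, ← mul_assoc,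
    ← map_natCast (algebraMap K S), ← map_mul,
    inv_mul_cancel₀ (Nat.cast_ne_zero.mpr t.factorial_ne_zero), map_one, one_mul]

end CharZero

end Polynomial

open MvPolynomial

theorem sum_esymm_le_factors_modulo_boolean_relations_general (n s : ℕ) :
    ∃ (μ : ℂ) (γ : Fin s → ℂ),
      (∑ t ∈ Finset.range (s + 1), MvPolynomial.esymm (Fin n) ℂ t) -
        μ • ∏ j : Fin s, (C (γ j) + ∑ i : Fin n, (X i : MvPolynomial (Fin n) ℂ)) ∈
        Ideal.span (Set.range fun i : Fin n =>
          (X i : MvPolynomial (Fin n) ℂ) ^ 2 - X i) := by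
  set I := Ideal.span (Set.range fun i : Fin n => (X i : MvPolynomial (Fin n) ℂ) ^ 2 - X i)
  set π := Ideal.Quotient.mkₐ ℂ I
  have hidem : ∀ i ∈ univ, IsIdempotentElem (π (X i)) := fun i _ => by
    rw [IsIdempotentElem, ← map_mul, ← sq, ← sub_eq_zero, ← map_sub, Ideal.Quotient.mkₐ_eq_mk,
      Ideal.Quotient.eq_zero_iff_mem]
    exact Ideal.subset_span ⟨i, rfl⟩
  have hesymm (t : ℕ) : π (esymm (Fin n) ℂ t) = (univ.val.map fun i => π (X i)).esymm t :=
    (DFunLike.congr_fun (aeval_unique π) _).trans (aeval_esymm_eq_multiset_esymm _ _ _ _)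
  obtain ⟨r, hr⟩ := Polynomial.exists_eq_C_leadingCoeff_mul_prod_X_sub_C
    (Polynomial.natDegree_chooseSum (K := ℂ) s)
  refine ⟨(Polynomial.chooseSum ℂ s).leadingCoeff, fun j => -r j, ?_⟩
  have hfactor : (Polynomial.chooseSum ℂ s).leadingCoeff • ∏ j, (C (-r j) + ∑ i : Fin n, X i) =
      Polynomial.aeval (∑ i : Fin n, X i) (Polynomial.chooseSum ℂ s) := by
    conv_rhs => rw [hr]
    simp [map_prod, Algebra.smul_def, sub_eq_add_neg, add_comm]
  rw [← Ideal.Quotient.eq_zero_iff_mem, ← Ideal.Quotient.mkₐ_eq_mk ℂ, map_sub, sub_eq_zero,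
    hfactor, ← Polynomial.aeval_algHom_apply, map_sum, map_sum,
    Polynomial.aeval_sum_chooseSum_of_isIdempotentElem hidem]
  exact sum_congr rfl fun t _ => hesymm t

theorem sum_esymm_le_factors_modulo_boolean_relations (n s : ℕ) (hs : s ≤ n) :
    ∃ (μ : ℂ) (γ : Fin s → ℂ),
      (∑ t ∈ Finset.range (s + 1), MvPolynomial.esymm (Fin n) ℂ t) -
        μ • ∏ j : Fin s, (C (γ j) + ∑ i : Fin n, (X i : MvPolynomial (Fin n) ℂ)) ∈
        Ideal.span (Set.range fun i : Fin n =>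
          (X i : MvPolynomial (Fin n) ℂ) ^ 2 - X i) :=
  sum_esymm_le_factors_modulo_boolean_relations_general n s
end
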